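/- Under the constrained random coding ensemble with joint typicality decoding, the probability of error satisfies P(E) ≤ P(E_1 | M=1) + P(A) + 2^{n(R − I(X;Y) + γ + δ(ε))}, where δ(ε) → 0 as ε → 0; consequently, if R < I(X;Y) − γ and both P(E_1|M=1) → 0 and P(A) → 0, then P(E) → 0 as n → ∞. -/

import Mathlib

open scoped Classical

/-- Probability of an event under a pmf `μ` on a finite sample space. -/
noncomputable def Pr {Ω : Type*} [Fintype Ω] (μ : Ω → ℝ) (E : Ω → Prop) : ℝ :=
  ∑ ω, if E ω then μ ω else 0

/-- Sample space of the constrained random-coding ensemble `(S, 𝒞, Yⁿ, M)`: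
a constraint value, a codebook of `K` codewords, a channel output word, and a
message. -/
abbrev EnsSpace (SS X Y : Type*) (n K : ℕ) : Type _ :=
  SS × (Fin K → Fin n → X) × (Fin n → Y) × Fin K

/-- Joint pmf of the ensemble: `M` uniform on the `K` messages, `S ∼ p_S`,
codewords conditionally i.i.d. `∼ q_s` given `S = s`, and `Yⁿ ∼ wⁿ(·|Xⁿ(M))`. -/
noncomputable def μens {SS X Y : Type*} (n K : ℕ) (pS : SS → ℝ)
    (qs : SS → (Fin n → X) → ℝ) (w : X → Y → ℝ) :
    EnsSpace SS X Y n K → ℝ :=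
  fun ω => ((K : ℝ))⁻¹ * pS ω.1 * (∏ j, qs ω.1 (ω.2.1 j)) *
    ∏ i, w (ω.2.1 ω.2.2.2 i) (ω.2.2.1 i)

/-- Information density
`i(s;yⁿ) = log₂( p_{S,Yⁿ}(s,yⁿ) / (p_S(s) tⁿ(yⁿ)) )` with
`p_{S,Yⁿ}(s,yⁿ) = p_S(s) ∑_{xⁿ} q_s(xⁿ) wⁿ(yⁿ|xⁿ)` and `t(y) = ∑_x q(x)w(y|x)`. -/
noncomputable def infoD {SS X Y : Type*} [Fintype X] [Fintype Y] (n : ℕ)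
    (q : X → ℝ) (w : X → Y → ℝ) (pS : SS → ℝ) (qs : SS → (Fin n → X) → ℝ)
    (s : SS) (y : Fin n → Y) : ℝ :=
  Real.logb 2 ((pS s * ∑ x : Fin n → X, qs s x * ∏ i, w (x i) (y i)) /
    (pS s * ∏ i, ∑ a, q a * w a (y i)))

/-- `I(X;Y)` in bits for `(X,Y) ∼ q(x)w(y|x)`. -/
noncomputable def Ixy {X Y : Type*} [Fintype X] [Fintype Y] (q : X → ℝ)
    (w : X → Y → ℝ) : ℝ :=
  ∑ a, ∑ b, q a * w a b *
    Real.logb 2 (q a * w a b / (q a * ∑ a', q a' * w a' b))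

/-- Probability of error `P(E)`, `E = {M̂ ≠ M}`, under the joint typicality
decoder with typical set `T`: an error occurs unless the transmitted codeword
is jointly typical with `Yⁿ` and no other codeword is. -/
noncomputable def PE {SS X Y : Type*} [Fintype SS] [Fintype X] [Fintype Y]
    (n K : ℕ) (pS : SS → ℝ) (qs : SS → (Fin n → X) → ℝ) (w : X → Y → ℝ)
    (T : Finset ((Fin n → X) × (Fin n → Y))) : ℝ :=
  Pr (μens n K pS qs w) fun ω =>
    ¬((ω.2.1 ω.2.2.2, ω.2.2.1) ∈ T ∧
      ∀ j, j ≠ ω.2.2.2 → (ω.2.1 j, ω.2.2.1) ∉ T)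

/-- `P(E₁ | M = m₀)` where `E₁ = {(Xⁿ(M), Yⁿ) ∉ T}`. -/
noncomputable def PE1cond {SS X Y : Type*} [Fintype SS] [Fintype X] [Fintype Y]
    (n K : ℕ) (pS : SS → ℝ) (qs : SS → (Fin n → X) → ℝ) (w : X → Y → ℝ)
    (T : Finset ((Fin n → X) × (Fin n → Y))) (m₀ : Fin K) : ℝ :=
  Pr (μens n K pS qs w)
      (fun ω => (ω.2.1 ω.2.2.2, ω.2.2.1) ∉ T ∧ ω.2.2.2 = m₀) /
    Pr (μens n K pS qs w) (fun ω => ω.2.2.2 = m₀)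

/-- `P(A)` where `A = {i(S;Yⁿ) > nγ}`. -/
noncomputable def PA {SS X Y : Type*} [Fintype SS] [Fintype X] [Fintype Y]
    (n K : ℕ) (q : X → ℝ) (pS : SS → ℝ) (qs : SS → (Fin n → X) → ℝ)
    (w : X → Y → ℝ) (γ : ℝ) : ℝ :=
  Pr (μens n K pS qs w) fun ω =>
    (n : ℝ) * γ < infoD n q w pS qs ω.1 ω.2.2.1

/-!
An error means that the transmitted codeword is atypical with `Yⁿ` (`E₁`), or that
`i(S;Yⁿ) > nγ` (`A`), or that some rival codeword `Xⁿ(j)`, `j ≠ M`, is jointly typical with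
`Yⁿ` while `i(S;Yⁿ) ≤ nγ`. By symmetry among the messages `P(E₁) = P(E₁ | M = m₀)`.
Given `S = s` a rival codeword is drawn from `q_s` independently of `(Xⁿ(M), Yⁿ)`, and
`(S, Yⁿ)` has density `p(s, yⁿ) = p_S(s) ∑ₓ q_s(x) wⁿ(yⁿ|x)`; off `A` this is at most
`2^{nγ} p_S(s) tⁿ(yⁿ)`, and averaging `q_s` over `p_S` gives back `qⁿ`. So each rival
contributes at most `2^{nγ} ∑_{T_ε} qⁿ tⁿ ≤ 2^{−n(I(X;Y) − γ − δ(ε))}`, and there are at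
most `2^{nR}` of them. For the limit choose `ε` with `δ(ε) < I(X;Y) − γ − R`.
-/

open Finset

lemma le_rpow_mul_of_logb_div_le {b N D c : ℝ} (hb : 1 < b) (hN : 0 ≤ N) (hD : 0 ≤ D)
    (hND : D = 0 → N = 0) (h : Real.logb b (N / D) ≤ c) : N ≤ b ^ c * D := by
  rcases hN.eq_or_lt with rfl | hN
  · exact mul_nonneg (Real.rpow_nonneg (by linarith) c) hD
  rcases hD.eq_or_lt with rfl | hD
  · exact absurd (hND rfl) hN.ne'
  rwa [Real.logb_le_iff_le_rpow hb (div_pos hN hD), div_le_iff₀ hD] at h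

lemma mul_two_rpow_mul_le {k S n R I γ d : ℝ} (hk0 : 0 ≤ k) (hk : k ≤ 2 ^ (n * R))
    (hS : S ≤ 2 ^ (-n * (I - d))) :
    k * ((2 : ℝ) ^ (n * γ) * S) ≤ 2 ^ (n * (R - I + γ + d)) :=
  calc k * ((2 : ℝ) ^ (n * γ) * S) ≤ k * (2 ^ (n * γ) * 2 ^ (-n * (I - d))) := by gcongr
    _ ≤ 2 ^ (n * R) * (2 ^ (n * γ) * 2 ^ (-n * (I - d))) := by gcongr
    _ = 2 ^ (n * (R - I + γ + d)) := by
      rw [← Real.rpow_add two_pos, ← Real.rpow_add two_pos]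
      ring_nf

lemma tendsto_two_rpow_natCast_mul_of_neg {c : ℝ} (hc : c < 0) :
    Filter.Tendsto (fun n : ℕ => (2 : ℝ) ^ ((n : ℝ) * c)) Filter.atTop (nhds 0) := by
  have hpow : ∀ n : ℕ, (2 : ℝ) ^ ((n : ℝ) * c) = ((2 : ℝ) ^ c) ^ n := fun n => by
    rw [mul_comm, Real.rpow_mul zero_le_two, Real.rpow_natCast]
  simp_rw [hpow]
  exact tendsto_pow_atTop_nhds_zero_of_lt_one (by positivity)
    (Real.rpow_lt_one_of_one_lt_of_neg one_lt_two hc)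

section Probability

variable {Ω : Type*} [Fintype Ω] {μ : Ω → ℝ}

lemma Pr_nonneg (hμ : ∀ ω, 0 ≤ μ ω) (E : Ω → Prop) : 0 ≤ Pr μ E :=
  sum_nonneg fun ω _ => ite_nonneg (hμ ω) le_rfl

lemma Pr_mono (hμ : ∀ ω, 0 ≤ μ ω) {E F : Ω → Prop} (h : ∀ ω, E ω → F ω) :
    Pr μ E ≤ Pr μ F :=
  sum_le_sum fun ω _ => by
    by_cases hE : E ω
    · simp [hE, h ω hE]
    · by_cases hF : F ω <;> simp [hE, hF, hμ ω]

lemma Pr_eq_zero {E : Ω → Prop} (h : ∀ ω, ¬E ω) : Pr μ E = 0 :=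
  sum_eq_zero fun ω _ => if_neg (h ω)

lemma Pr_or_le (hμ : ∀ ω, 0 ≤ μ ω) (E F : Ω → Prop) :
    Pr μ (fun ω => E ω ∨ F ω) ≤ Pr μ E + Pr μ F := by
  rw [Pr, Pr, Pr, ← sum_add_distrib]
  refine sum_le_sum fun ω _ => ?_
  by_cases hE : E ω <;> by_cases hF : F ω <;> simp [hE, hF, hμ ω]

lemma Pr_exists_le (hμ : ∀ ω, 0 ≤ μ ω) {ι : Type*} [Fintype ι] (P : ι → Ω → Prop) :
    Pr μ (fun ω => ∃ i, P i ω) ≤ ∑ i, Pr μ (P i) := by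
  unfold Pr
  rw [sum_comm]
  refine sum_le_sum fun ω _ => ?_
  split_ifs with h
  · obtain ⟨i, hi⟩ := h
    calc μ ω = if P i ω then μ ω else 0 := (if_pos hi).symm
      _ ≤ ∑ i, if P i ω then μ ω else 0 :=
        single_le_sum (f := fun i => if P i ω then μ ω else 0)
          (fun _ _ => ite_nonneg (hμ ω) le_rfl) (mem_univ i)
  · exact sum_nonneg fun _ _ => ite_nonneg (hμ ω) le_rfl

lemma Pr_eq_sum_fiber {ι : Type*} [Fintype ι] (E : Ω → Prop) (c : Ω → ι) :
    Pr μ E = ∑ i, Pr μ (fun ω => E ω ∧ c ω = i) := by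
  unfold Pr
  rw [sum_comm]
  refine sum_congr rfl fun ω _ => ?_
  by_cases hE : E ω <;> simp [hE]

end Probability

section Codebook

variable {ι A R : Type*} [Fintype ι] [DecidableEq ι] [Fintype A] [CommSemiring R]
  {g : A → R}

lemma sum_pi_prod_mul_prod (hg : ∑ a, g a = 1) (s : Finset ι) (f : ι → A → R) :
    ∑ C : ι → A, (∏ l, g (C l)) * ∏ l ∈ s, f l (C l) = ∏ l ∈ s, ∑ a, g a * f l a := by
  let φ : ι → A → R := fun l a => g a * if l ∈ s then f l a else 1
  calc ∑ C : ι → A, (∏ l, g (C l)) * ∏ l ∈ s, f l (C l)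
      = ∑ C : ι → A, ∏ l, φ l (C l) := sum_congr rfl fun C _ => by
        rw [prod_mul_distrib, prod_ite_mem, univ_inter]
    _ = ∏ l, ∑ a, φ l a := (Fintype.prod_sum φ).symm
    _ = ∏ l, if l ∈ s then ∑ a, g a * f l a else 1 := prod_congr rfl fun l _ => by
        by_cases hl : l ∈ s <;> simp [φ, hl, hg]
    _ = ∏ l ∈ s, ∑ a, g a * f l a := by rw [prod_ite_mem, univ_inter]

lemma sum_pi_prod_mul_apply (hg : ∑ a, g a = 1) (m : ι) (f : A → R) :
    ∑ C : ι → A, (∏ l, g (C l)) * f (C m) = ∑ a, g a * f a := by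
  simpa using sum_pi_prod_mul_prod hg {m} fun _ => f

lemma sum_pi_prod_mul_apply_mul_apply (hg : ∑ a, g a = 1) {m j : ι} (hmj : m ≠ j)
    (f h : A → R) :
    ∑ C : ι → A, (∏ l, g (C l)) * (f (C m) * h (C j))
      = (∑ a, g a * f a) * ∑ a, g a * h a := by
  simpa [prod_pair hmj, hmj.symm] using
    sum_pi_prod_mul_prod hg {m, j} fun l => if l = m then f else h

end Codebook

section Channel

variable {X Y : Type*} {n : ℕ} {q : X → ℝ} {w : X → Y → ℝ}

lemma sum_prod_channel_eq_one [Fintype Y] (hw1 : ∀ a, ∑ b, w a b = 1) (x : Fin n → X) :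
    ∑ y : Fin n → Y, ∏ i, w (x i) (y i) = 1 := by
  rw [← Fintype.prod_sum fun i b => w (x i) b]
  simp [hw1]

variable [Fintype X]

lemma prod_sum_mul_nonneg (hq0 : ∀ a, 0 ≤ q a) (hw0 : ∀ a b, 0 ≤ w a b) (y : Fin n → Y) :
    0 ≤ ∏ i, ∑ a, q a * w a (y i) :=
  prod_nonneg fun _ _ => sum_nonneg fun a _ => mul_nonneg (hq0 a) (hw0 a _)

lemma sum_typical_nonneg (hq0 : ∀ a, 0 ≤ q a) (hw0 : ∀ a b, 0 ≤ w a b)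
    (T : Finset ((Fin n → X) × (Fin n → Y))) :
    0 ≤ ∑ p ∈ T, (∏ i, q (p.1 i)) * ∏ i, ∑ a, q a * w a (p.2 i) :=
  sum_nonneg fun p _ => mul_nonneg (prod_nonneg fun _ _ => hq0 _) (prod_sum_mul_nonneg hq0 hw0 p.2)

lemma sum_prod_mul_prod_eq_prod_sum_mul (y : Fin n → Y) :
    ∑ x : Fin n → X, (∏ i, q (x i)) * ∏ i, w (x i) (y i) = ∏ i, ∑ a, q a * w a (y i) := by
  rw [Fintype.prod_sum fun i a => q a * w a (y i)]
  simp_rw [prod_mul_distrib]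

end Channel

section Mixture

variable {SS X Y : Type*} [Fintype X] {n : ℕ} {pS : SS → ℝ}
  {qs : SS → (Fin n → X) → ℝ} {q : X → ℝ} {w : X → Y → ℝ}

lemma joint_nonneg (hpS0 : ∀ s, 0 ≤ pS s) (hqs0 : ∀ s x, 0 ≤ qs s x)
    (hw0 : ∀ a b, 0 ≤ w a b) (s : SS) (y : Fin n → Y) :
    0 ≤ pS s * ∑ x, qs s x * ∏ i, w (x i) (y i) :=
  mul_nonneg (hpS0 s) (sum_nonneg fun x _ =>
    mul_nonneg (hqs0 s x) (prod_nonneg fun _ _ => hw0 _ _))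

variable [Fintype SS]

lemma sum_mixture_eq (hmarg : ∀ x : Fin n → X, ∑ s, pS s * qs s x = ∏ i, q (x i))
    (f : (Fin n → X) → ℝ) :
    ∑ s, pS s * ∑ x, qs s x * f x = ∑ x, (∏ i, q (x i)) * f x := by
  simp_rw [mul_sum, ← mul_assoc]
  rw [sum_comm]
  simp_rw [← sum_mul, hmarg]

lemma joint_le_output (hpS0 : ∀ s, 0 ≤ pS s) (hqs0 : ∀ s x, 0 ≤ qs s x)
    (hw0 : ∀ a b, 0 ≤ w a b) (hmarg : ∀ x : Fin n → X, ∑ s, pS s * qs s x = ∏ i, q (x i))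
    (s : SS) (y : Fin n → Y) :
    pS s * ∑ x, qs s x * ∏ i, w (x i) (y i) ≤ ∏ i, ∑ a, q a * w a (y i) :=
  calc pS s * ∑ x, qs s x * ∏ i, w (x i) (y i)
      ≤ ∑ s, pS s * ∑ x, qs s x * ∏ i, w (x i) (y i) :=
        single_le_sum (f := fun s => pS s * ∑ x, qs s x * ∏ i, w (x i) (y i))
          (fun s _ => joint_nonneg hpS0 hqs0 hw0 s y) (mem_univ s)
    _ = ∏ i, ∑ a, q a * w a (y i) := by
        rw [sum_mixture_eq hmarg, sum_prod_mul_prod_eq_prod_sum_mul]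

variable [Fintype Y]

lemma sum_mixture_typical_eq (hmarg : ∀ x : Fin n → X, ∑ s, pS s * qs s x = ∏ i, q (x i))
    (T : Finset ((Fin n → X) × (Fin n → Y))) (t : (Fin n → Y) → ℝ) :
    ∑ s, ∑ y, pS s * t y * ∑ x, qs s x * (if (x, y) ∈ T then 1 else 0)
      = ∑ p ∈ T, (∏ i, q (p.1 i)) * t p.2 := by
  calc ∑ s, ∑ y, pS s * t y * ∑ x, qs s x * (if (x, y) ∈ T then 1 else 0)
      = ∑ y, t y * ∑ s, pS s * ∑ x, qs s x * (if (x, y) ∈ T then 1 else 0) := by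
        rw [sum_comm]
        refine sum_congr rfl fun y _ => ?_
        rw [mul_sum]
        exact sum_congr rfl fun s _ => by ring
    _ = ∑ p : (Fin n → X) × (Fin n → Y), if p ∈ T then (∏ i, q (p.1 i)) * t p.2 else 0 := by
        simp_rw [sum_mixture_eq hmarg, mul_sum, Fintype.sum_prod_type]
        rw [sum_comm]
        refine sum_congr rfl fun x _ => sum_congr rfl fun y _ => ?_
        split_ifs <;> ring
    _ = ∑ p ∈ T, (∏ i, q (p.1 i)) * t p.2 := by rw [sum_ite_mem, univ_inter]

lemma joint_le_of_not_lt_infoD (hq0 : ∀ a, 0 ≤ q a) (hpS0 : ∀ s, 0 ≤ pS s)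
    (hqs0 : ∀ s x, 0 ≤ qs s x) (hw0 : ∀ a b, 0 ≤ w a b)
    (hmarg : ∀ x : Fin n → X, ∑ s, pS s * qs s x = ∏ i, q (x i)) {γ : ℝ} {s : SS}
    {y : Fin n → Y} (h : ¬(n : ℝ) * γ < infoD n q w pS qs s y) :
    pS s * ∑ x, qs s x * ∏ i, w (x i) (y i)
      ≤ (2 : ℝ) ^ ((n : ℝ) * γ) * (pS s * ∏ i, ∑ a, q a * w a (y i)) := by
  have hjoint := joint_le_output hpS0 hqs0 hw0 hmarg s y
  have hjoint0 := joint_nonneg hpS0 hqs0 hw0 s y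
  refine le_rpow_mul_of_logb_div_le one_lt_two hjoint0
    (mul_nonneg (hpS0 s) (prod_sum_mul_nonneg hq0 hw0 y))
    (fun h0 => ?_) (not_lt.mp h)
  rcases mul_eq_zero.mp h0 with hs | ht
  · rw [hs, zero_mul]
  · exact le_antisymm (hjoint.trans_eq ht) hjoint0

end Mixture

section Ensemble

variable {SS X Y : Type*} {n K : ℕ} {pS : SS → ℝ} {qs : SS → (Fin n → X) → ℝ}
  {q : X → ℝ} {w : X → Y → ℝ}

lemma μens_nonneg (hpS0 : ∀ s, 0 ≤ pS s) (hqs0 : ∀ s x, 0 ≤ qs s x)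
    (hw0 : ∀ a b, 0 ≤ w a b) (ω : EnsSpace SS X Y n K) : 0 ≤ μens n K pS qs w ω :=
  mul_nonneg (mul_nonneg (mul_nonneg (by positivity) (hpS0 _))
    (prod_nonneg fun _ _ => hqs0 _ _)) (prod_nonneg fun _ _ => hw0 _ _)

variable [Fintype SS] [Fintype X] [Fintype Y]

lemma Pr_μens_and_message (P : EnsSpace SS X Y n K → Prop) (m : Fin K) :
    Pr (μens n K pS qs w) (fun ω => P ω ∧ ω.2.2.2 = m)
      = (K : ℝ)⁻¹ * ∑ s, ∑ y : Fin n → Y, pS s * ∑ C : Fin K → Fin n → X,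
          (∏ l, qs s (C l)) * if P (s, C, y, m) then ∏ i, w (C m i) (y i) else 0 := by
  unfold Pr μens
  simp only [Fintype.sum_prod_type, mul_sum]
  refine sum_congr rfl fun s _ => ?_
  rw [sum_comm]
  refine sum_congr rfl fun y _ => sum_congr rfl fun C _ => ?_
  rw [sum_eq_single m (fun m' _ hm' => if_neg fun h => hm' h.2) (by simp)]
  by_cases hP : P (s, C, y, m) <;> simp [hP]
  ring

lemma Pr_μens_codeword_and_message (hqs1 : ∀ s, ∑ x, qs s x = 1)
    (F : SS → (Fin n → X) → (Fin n → Y) → Prop) (m : Fin K) :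
    Pr (μens n K pS qs w) (fun ω => F ω.1 (ω.2.1 ω.2.2.2) ω.2.2.1 ∧ ω.2.2.2 = m)
      = (K : ℝ)⁻¹ * ∑ s, ∑ y : Fin n → Y, pS s * ∑ x,
          qs s x * if F s x y then ∏ i, w (x i) (y i) else 0 := by
  rw [Pr_μens_and_message (fun ω => F ω.1 (ω.2.1 ω.2.2.2) ω.2.2.1)]
  refine congrArg _ (sum_congr rfl fun s _ => sum_congr rfl fun y _ => congrArg _ ?_)
  exact sum_pi_prod_mul_apply (hqs1 s) m fun x => if F s x y then ∏ i, w (x i) (y i) else 0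

lemma Pr_μens_rival_and_message (hqs1 : ∀ s, ∑ x, qs s x = 1)
    (F : SS → (Fin n → X) → (Fin n → Y) → Prop) {m j : Fin K} (hmj : m ≠ j) :
    Pr (μens n K pS qs w) (fun ω => F ω.1 (ω.2.1 j) ω.2.2.1 ∧ ω.2.2.2 = m)
      = (K : ℝ)⁻¹ * ∑ s, ∑ y : Fin n → Y, pS s * ((∑ x, qs s x * ∏ i, w (x i) (y i)) *
          ∑ x, qs s x * if F s x y then 1 else 0) := by
  rw [Pr_μens_and_message (fun ω => F ω.1 (ω.2.1 j) ω.2.2.1)]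
  refine congrArg _ (sum_congr rfl fun s _ => sum_congr rfl fun y _ => congrArg _ ?_)
  rw [← sum_pi_prod_mul_apply_mul_apply (hqs1 s) hmj]
  refine sum_congr rfl fun C _ => ?_
  split_ifs <;> simp

lemma Pr_μens_message (hpS1 : ∑ s, pS s = 1) (hqs1 : ∀ s, ∑ x, qs s x = 1)
    (hw1 : ∀ a, ∑ b, w a b = 1) (m : Fin K) :
    Pr (μens n K pS qs w) (fun ω => ω.2.2.2 = m) = (K : ℝ)⁻¹ := by
  have h := Pr_μens_codeword_and_message (pS := pS) (w := w) hqs1 (fun _ _ _ => True) m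
  simp only [true_and, if_true] at h
  rw [h]
  simp_rw [mul_sum]
  rw [sum_congr rfl fun s _ => sum_comm]
  simp_rw [← mul_sum, sum_prod_channel_eq_one hw1, mul_one, hqs1, mul_one, hpS1, mul_one]

lemma PE1cond_eq_Pr_atypical (hpS1 : ∑ s, pS s = 1) (hqs1 : ∀ s, ∑ x, qs s x = 1)
    (hw1 : ∀ a, ∑ b, w a b = 1) (T : Finset ((Fin n → X) × (Fin n → Y))) (m₀ : Fin K) :
    PE1cond n K pS qs w T m₀
      = Pr (μens n K pS qs w) (fun ω => (ω.2.1 ω.2.2.2, ω.2.2.1) ∉ T) := by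
  have hslice := Pr_μens_codeword_and_message (pS := pS) (K := K) (w := w) hqs1
    fun _ x y => (x, y) ∉ T
  have hK : (K : ℝ) ≠ 0 := Nat.cast_ne_zero.mpr m₀.pos.ne'
  rw [PE1cond, Pr_μens_message hpS1 hqs1 hw1,
    Pr_eq_sum_fiber (μ := μens n K pS qs w) (fun ω => (ω.2.1 ω.2.2.2, ω.2.2.1) ∉ T)
      fun ω => ω.2.2.2]
  simp only [hslice, sum_const, card_univ, Fintype.card_fin, nsmul_eq_mul]
  field_simp

lemma Pr_rival_typical_and_message_le (hq0 : ∀ a, 0 ≤ q a) (hpS0 : ∀ s, 0 ≤ pS s)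
    (hqs0 : ∀ s x, 0 ≤ qs s x) (hqs1 : ∀ s, ∑ x, qs s x = 1) (hw0 : ∀ a b, 0 ≤ w a b)
    (hmarg : ∀ x : Fin n → X, ∑ s, pS s * qs s x = ∏ i, q (x i)) (γ : ℝ)
    (T : Finset ((Fin n → X) × (Fin n → Y))) {m j : Fin K} (hmj : m ≠ j) :
    Pr (μens n K pS qs w) (fun ω => ((ω.2.1 j, ω.2.2.1) ∈ T ∧
        ¬(n : ℝ) * γ < infoD n q w pS qs ω.1 ω.2.2.1) ∧ ω.2.2.2 = m)
      ≤ (K : ℝ)⁻¹ * ((2 : ℝ) ^ ((n : ℝ) * γ) *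
          ∑ p ∈ T, (∏ i, q (p.1 i)) * ∏ i, ∑ a, q a * w a (p.2 i)) := by
  refine (Pr_μens_rival_and_message hqs1
    (fun s x y => (x, y) ∈ T ∧ ¬(n : ℝ) * γ < infoD n q w pS qs s y) hmj).trans_le ?_
  refine mul_le_mul_of_nonneg_left ?_ (by positivity)
  rw [← sum_mixture_typical_eq hmarg T fun y => ∏ i, ∑ a, q a * w a (y i), mul_sum]
  refine sum_le_sum fun s _ => ?_
  rw [mul_sum]
  refine sum_le_sum fun y _ => ?_
  have htyp0 : 0 ≤ ∑ x, qs s x * if (x, y) ∈ T then (1 : ℝ) else 0 :=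
    sum_nonneg fun x _ => mul_nonneg (hqs0 s x) (ite_nonneg zero_le_one le_rfl)
  by_cases hA : (n : ℝ) * γ < infoD n q w pS qs s y
  · simp only [hA, not_true_eq_false, and_false, if_false, mul_zero, sum_const_zero]
    exact mul_nonneg (by positivity)
      (mul_nonneg (mul_nonneg (hpS0 s) (prod_sum_mul_nonneg hq0 hw0 y)) htyp0)
  · simp only [hA, not_false_eq_true, and_true]
    calc pS s * ((∑ x, qs s x * ∏ i, w (x i) (y i)) *
          ∑ x, qs s x * if (x, y) ∈ T then (1 : ℝ) else 0)
        = (pS s * ∑ x, qs s x * ∏ i, w (x i) (y i)) *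
            ∑ x, qs s x * if (x, y) ∈ T then (1 : ℝ) else 0 := (mul_assoc _ _ _).symm
      _ ≤ ((2 : ℝ) ^ ((n : ℝ) * γ) * (pS s * ∏ i, ∑ a, q a * w a (y i))) *
            ∑ x, qs s x * if (x, y) ∈ T then (1 : ℝ) else 0 :=
          mul_le_mul_of_nonneg_right
            (joint_le_of_not_lt_infoD hq0 hpS0 hqs0 hw0 hmarg hA) htyp0
      _ = _ := by ring

lemma Pr_exists_rival_typical_le (hq0 : ∀ a, 0 ≤ q a) (hpS0 : ∀ s, 0 ≤ pS s)
    (hqs0 : ∀ s x, 0 ≤ qs s x) (hqs1 : ∀ s, ∑ x, qs s x = 1) (hw0 : ∀ a b, 0 ≤ w a b)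
    (hmarg : ∀ x : Fin n → X, ∑ s, pS s * qs s x = ∏ i, q (x i)) (γ : ℝ)
    (T : Finset ((Fin n → X) × (Fin n → Y))) :
    Pr (μens n K pS qs w) (fun ω => ∃ j, j ≠ ω.2.2.2 ∧ (ω.2.1 j, ω.2.2.1) ∈ T ∧
        ¬(n : ℝ) * γ < infoD n q w pS qs ω.1 ω.2.2.1)
      ≤ K * ((2 : ℝ) ^ ((n : ℝ) * γ) *
          ∑ p ∈ T, (∏ i, q (p.1 i)) * ∏ i, ∑ a, q a * w a (p.2 i)) := by
  set B := (2 : ℝ) ^ ((n : ℝ) * γ) * ∑ p ∈ T, (∏ i, q (p.1 i)) * ∏ i, ∑ a, q a * w a (p.2 i)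
  have hμ := μens_nonneg (K := K) hpS0 hqs0 hw0
  have hpair : ∀ j m : Fin K, Pr (μens n K pS qs w) (fun ω => (j ≠ ω.2.2.2 ∧
      (ω.2.1 j, ω.2.2.1) ∈ T ∧ ¬(n : ℝ) * γ < infoD n q w pS qs ω.1 ω.2.2.1) ∧
        ω.2.2.2 = m) ≤ (K : ℝ)⁻¹ * B := by
    intro j m
    rcases eq_or_ne m j with rfl | hmj
    · rw [Pr_eq_zero fun ω h => h.1.1 h.2.symm]
      exact mul_nonneg (by positivity)
        (mul_nonneg (by positivity) (sum_typical_nonneg hq0 hw0 T))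
    · exact (Pr_mono hμ fun ω h => ⟨h.1.2, h.2⟩).trans
        (Pr_rival_typical_and_message_le hq0 hpS0 hqs0 hqs1 hw0 hmarg γ T hmj)
  calc _ ≤ ∑ j : Fin K, Pr (μens n K pS qs w) (fun ω => j ≠ ω.2.2.2 ∧
          (ω.2.1 j, ω.2.2.1) ∈ T ∧ ¬(n : ℝ) * γ < infoD n q w pS qs ω.1 ω.2.2.1) :=
        Pr_exists_le hμ _
    _ = ∑ j : Fin K, ∑ m : Fin K, Pr (μens n K pS qs w) (fun ω => (j ≠ ω.2.2.2 ∧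
          (ω.2.1 j, ω.2.2.1) ∈ T ∧ ¬(n : ℝ) * γ < infoD n q w pS qs ω.1 ω.2.2.1) ∧
            ω.2.2.2 = m) :=
        sum_congr rfl fun j _ => Pr_eq_sum_fiber (μ := μens n K pS qs w) _ fun ω => ω.2.2.2
    _ ≤ ∑ _j : Fin K, ∑ _m : Fin K, (K : ℝ)⁻¹ * B :=
        sum_le_sum fun j _ => sum_le_sum fun m _ => hpair j m
    _ = K * B := by
        obtain rfl | hK := K.eq_zero_or_pos
        · simp
        · simp only [sum_const, card_univ, Fintype.card_fin, nsmul_eq_mul]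
          field_simp

theorem PE_le_PE1cond_add_PA_add (hq0 : ∀ a, 0 ≤ q a) (hpS0 : ∀ s, 0 ≤ pS s)
    (hpS1 : ∑ s, pS s = 1) (hqs0 : ∀ s x, 0 ≤ qs s x) (hqs1 : ∀ s, ∑ x, qs s x = 1)
    (hw0 : ∀ a b, 0 ≤ w a b) (hw1 : ∀ a, ∑ b, w a b = 1)
    (hmarg : ∀ x : Fin n → X, ∑ s, pS s * qs s x = ∏ i, q (x i)) (γ : ℝ)
    (T : Finset ((Fin n → X) × (Fin n → Y))) (m₀ : Fin K) :
    PE n K pS qs w T ≤ PE1cond n K pS qs w T m₀ + PA n K q pS qs w γ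
      + K * ((2 : ℝ) ^ ((n : ℝ) * γ) *
          ∑ p ∈ T, (∏ i, q (p.1 i)) * ∏ i, ∑ a, q a * w a (p.2 i)) := by
  have hμ := μens_nonneg (K := K) hpS0 hqs0 hw0
  rw [PE1cond_eq_Pr_atypical hpS1 hqs1 hw1 T m₀]
  calc PE n K pS qs w T
      ≤ Pr (μens n K pS qs w) (fun ω => ((ω.2.1 ω.2.2.2, ω.2.2.1) ∉ T ∨
          (n : ℝ) * γ < infoD n q w pS qs ω.1 ω.2.2.1) ∨
          ∃ j, j ≠ ω.2.2.2 ∧ (ω.2.1 j, ω.2.2.1) ∈ T ∧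
            ¬(n : ℝ) * γ < infoD n q w pS qs ω.1 ω.2.2.1) := by
        refine Pr_mono hμ fun ω hE => ?_
        by_cases hA : (n : ℝ) * γ < infoD n q w pS qs ω.1 ω.2.2.1
        · exact Or.inl (Or.inr hA)
        rcases not_and_or.mp hE with h1 | h2
        · exact Or.inl (Or.inl h1)
        push Not at h2
        obtain ⟨j, hj, hT⟩ := h2
        exact Or.inr ⟨j, hj, hT, hA⟩
    _ ≤ _ := by
        refine (Pr_or_le hμ _ _).trans (add_le_add (Pr_or_le hμ _ _) ?_)
        exact Pr_exists_rival_typical_le hq0 hpS0 hqs0 hqs1 hw0 hmarg γ T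

end Ensemble

theorem constrained_random_coding_packing_general
    {X Y : Type*} [Fintype X] [Fintype Y]
    (S : ℕ → Type*) [∀ n, Fintype (S n)]
    (q : X → ℝ) (hq0 : ∀ a, 0 ≤ q a)
    (w : X → Y → ℝ) (hw0 : ∀ a b, 0 ≤ w a b) (hw1 : ∀ a, ∑ b, w a b = 1)
    (pS : (n : ℕ) → S n → ℝ) (hpS0 : ∀ n s, 0 ≤ pS n s)
    (hpS1 : ∀ n, ∑ s, pS n s = 1)
    (qs : (n : ℕ) → S n → (Fin n → X) → ℝ) (hqs0 : ∀ n s x, 0 ≤ qs n s x)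
    (hqs1 : ∀ n s, ∑ x : Fin n → X, qs n s x = 1)
    (hmarg : ∀ n (x : Fin n → X), ∑ s, pS n s * qs n s x = ∏ i, q (x i))
    (K : ℕ → ℕ) (hK : ∀ n, 0 < K n)
    (R : ℝ) (hKR : ∀ n, (K n : ℝ) ≤ 2 ^ ((n : ℝ) * R))
    (γ : ℝ) (δ : ℝ → ℝ)
    (hδ : Filter.Tendsto δ (nhdsWithin 0 (Set.Ioi 0)) (nhds 0))
    (T : (n : ℕ) → ℝ → Finset ((Fin n → X) × (Fin n → Y)))
    (hJT : ∀ n (ε : ℝ), 0 < ε →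
      ∑ p ∈ T n ε, (∏ i, q (p.1 i)) * ∏ i, ∑ a, q a * w a (p.2 i)
        ≤ (2 : ℝ) ^ (-(n : ℝ) * (Ixy q w - δ ε))) :
    (∀ n (ε : ℝ), 0 < ε →
      PE n (K n) (pS n) (qs n) w (T n ε)
        ≤ PE1cond n (K n) (pS n) (qs n) w (T n ε) (⟨0, hK n⟩ : Fin (K n))
          + PA n (K n) q (pS n) (qs n) w γ
          + (2 : ℝ) ^ ((n : ℝ) * (R - Ixy q w + γ + δ ε)))
    ∧ (R < Ixy q w - γ →
        (∀ ε : ℝ, 0 < ε →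
          Filter.Tendsto
            (fun n => PE1cond n (K n) (pS n) (qs n) w (T n ε)
              (⟨0, hK n⟩ : Fin (K n)))
            Filter.atTop (nhds 0)) →
        Filter.Tendsto (fun n => PA n (K n) q (pS n) (qs n) w γ)
          Filter.atTop (nhds 0) →
        ∃ ε : ℝ, 0 < ε ∧
          Filter.Tendsto (fun n => PE n (K n) (pS n) (qs n) w (T n ε))
            Filter.atTop (nhds 0)) := by
  have hPE : ∀ n (ε : ℝ), 0 < ε →
      PE n (K n) (pS n) (qs n) w (T n ε)
        ≤ PE1cond n (K n) (pS n) (qs n) w (T n ε) (⟨0, hK n⟩ : Fin (K n))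
          + PA n (K n) q (pS n) (qs n) w γ
          + (2 : ℝ) ^ ((n : ℝ) * (R - Ixy q w + γ + δ ε)) := fun n ε hε =>
    (PE_le_PE1cond_add_PA_add hq0 (hpS0 n) (hpS1 n) (hqs0 n) (hqs1 n) hw0 hw1 (hmarg n) γ
      (T n ε) ⟨0, hK n⟩).trans
      (add_le_add le_rfl (mul_two_rpow_mul_le (Nat.cast_nonneg _) (hKR n) (hJT n ε hε)))
  refine ⟨hPE, fun hR hE1 hA => ?_⟩
  obtain ⟨ε, hδε, hε⟩ :=
    ((hδ.eventually_lt_const (by linarith : (0 : ℝ) < Ixy q w - γ - R)).and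
      eventually_mem_nhdsWithin).exists
  refine ⟨ε, hε, squeeze_zero (fun n => Pr_nonneg (μens_nonneg (hpS0 n) (hqs0 n) hw0) _)
    (fun n => hPE n ε hε) ?_⟩
  simpa using ((hE1 ε hε).add hA).add
    (tendsto_two_rpow_natCast_mul_of_neg (by linarith : R - Ixy q w + γ + δ ε < 0))

/-- Under the constrained random-coding ensemble with joint
typicality decoding,
`P(E) ≤ P(E₁|M=1) + P(A) + 2^{n(R − I(X;Y) + γ + δ(ε))}`, where `δ(ε) → 0` as
`ε → 0` (as provided by the joint typicality lemma
`∑_{(xⁿ,yⁿ)∈T_ε} qⁿ(xⁿ) tⁿ(yⁿ) ≤ 2^{−n(I(X;Y) − δ(ε))}`); consequently, if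
`R < I(X;Y) − γ`, `P(E₁|M=1) → 0` and `P(A) → 0`, then `P(E) → 0` as
`n → ∞` (for a suitably small `ε > 0`).  The number of messages `K n`
satisfies `K n ≤ 2^{nR}` (rate `R`). -/
theorem constrained_random_coding_packing
    {X Y : Type*} [Fintype X] [Fintype Y]
    (S : ℕ → Type*) [∀ n, Fintype (S n)]
    (q : X → ℝ) (hq0 : ∀ a, 0 ≤ q a) (hq1 : ∑ a, q a = 1)
    (w : X → Y → ℝ) (hw0 : ∀ a b, 0 ≤ w a b) (hw1 : ∀ a, ∑ b, w a b = 1)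
    (pS : (n : ℕ) → S n → ℝ) (hpS0 : ∀ n s, 0 ≤ pS n s)
    (hpS1 : ∀ n, ∑ s, pS n s = 1)
    (qs : (n : ℕ) → S n → (Fin n → X) → ℝ) (hqs0 : ∀ n s x, 0 ≤ qs n s x)
    (hqs1 : ∀ n s, ∑ x : Fin n → X, qs n s x = 1)
    (hmarg : ∀ n (x : Fin n → X), ∑ s, pS n s * qs n s x = ∏ i, q (x i))
    (K : ℕ → ℕ) (hK : ∀ n, 0 < K n)
    (R : ℝ) (hKR : ∀ n, (K n : ℝ) ≤ 2 ^ ((n : ℝ) * R))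
    (γ : ℝ) (δ : ℝ → ℝ)
    (hδ : Filter.Tendsto δ (nhdsWithin 0 (Set.Ioi 0)) (nhds 0))
    (T : (n : ℕ) → ℝ → Finset ((Fin n → X) × (Fin n → Y)))
    (hJT : ∀ n (ε : ℝ), 0 < ε →
      ∑ p ∈ T n ε, (∏ i, q (p.1 i)) * ∏ i, ∑ a, q a * w a (p.2 i)
        ≤ (2 : ℝ) ^ (-(n : ℝ) * (Ixy q w - δ ε))) :
    (∀ n (ε : ℝ), 0 < ε →
      PE n (K n) (pS n) (qs n) w (T n ε)
        ≤ PE1cond n (K n) (pS n) (qs n) w (T n ε) (⟨0, hK n⟩ : Fin (K n))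
          + PA n (K n) q (pS n) (qs n) w γ
          + (2 : ℝ) ^ ((n : ℝ) * (R - Ixy q w + γ + δ ε)))
    ∧ (R < Ixy q w - γ →
        (∀ ε : ℝ, 0 < ε →
          Filter.Tendsto
            (fun n => PE1cond n (K n) (pS n) (qs n) w (T n ε)
              (⟨0, hK n⟩ : Fin (K n)))
            Filter.atTop (nhds 0)) →
        Filter.Tendsto (fun n => PA n (K n) q (pS n) (qs n) w γ)
          Filter.atTop (nhds 0) →
        ∃ ε : ℝ, 0 < ε ∧
          Filter.Tendsto (fun n => PE n (K n) (pS n) (qs n) w (T n ε))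
            Filter.atTop (nhds 0)) :=
  constrained_random_coding_packing_general S q hq0 w hw0 hw1 pS hpS0 hpS1 qs hqs0 hqs1 hmarg K hK R
    hKR γ δ hδ T hJT
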